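/- arXiv:0904.2825 — 8 statements merged into one kernel-verified Lean document; each statement's English description precedes it below -/
import Mathlib

section
/- In a simple associative Γ-graded commutative algebra A over a field (with commutation rule ab = (-1)^{⟨ā,b̄⟩} ba for a bilinear map ⟨,⟩ : Γ×Γ → ℤ/2), every nonzero homogeneous element is neither a left nor a right zero divisor. -/
/-!
If `a` is homogeneous, the graded commutation rule gives `a m = ± m a` for every homogeneous
`m`, hence `a A = A a` since `A` is spanned by homogeneous elements. For such a "normal"
element the right and left annihilators of `a` are two-sided ideals; they do not contain `1`
when `a ≠ 0`, so by simplicity they vanish.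
-/

namespace IsSimpleRing

variable {R : Type*} [Ring R] [IsSimpleRing R]

theorem eq_zero_of_ne_zero_of_mul_left_eq_zero {a b : R} (ha : a ≠ 0)
    (hnormal : ∀ c, ∃ c', c' * a = a * c) (hb : a * b = 0) : b = 0 := by
  let annihilator : TwoSidedIdeal R := .mk' {x | a * x = 0} (mul_zero a)
    (fun hx hy => by simp_all [mul_add]) (fun hx => by simp_all)
    (fun {x y} hy => by
      obtain ⟨x', hx'⟩ := hnormal x
      show a * (x * y) = 0
      rw [← mul_assoc, ← hx', mul_assoc, hy, mul_zero])
    (fun {x y} hx => by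
      show a * (x * y) = 0
      rw [← mul_assoc, hx, zero_mul])
  by_contra hb0
  have hone := one_mem_of_ne_zero_mem annihilator hb0 (by simpa [annihilator] using hb)
  exact ha (by simpa [annihilator] using hone)

theorem eq_zero_of_ne_zero_of_mul_right_eq_zero {a b : R} (ha : a ≠ 0)
    (hnormal : ∀ c, ∃ c', a * c' = c * a) (hb : b * a = 0) : b = 0 := by
  have hnormal_op (c : Rᵐᵒᵖ) : ∃ c', c' * .op a = .op a * c := by
    obtain ⟨c', hc'⟩ := hnormal c.unop
    exact ⟨.op c', MulOpposite.unop_injective hc'⟩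
  have := eq_zero_of_ne_zero_of_mul_left_eq_zero (MulOpposite.op_ne_zero_iff a |>.2 ha)
    hnormal_op (b := .op b) (by rw [← MulOpposite.op_mul, hb, MulOpposite.op_zero])
  exact MulOpposite.op_injective this

end IsSimpleRing

namespace DirectSum.Decomposition

variable {ι R σ : Type*} [DecidableEq ι] [Ring R] [SetLike σ R] [AddSubmonoidClass σ R]
  (𝒜 : ι → σ) [Decomposition 𝒜]

theorem forall_exists_mul_eq_mul_of_homogeneous {a : R}
    (h : ∀ i, ∀ m ∈ 𝒜 i, ∃ m', m' * a = a * m) (c : R) : ∃ c', c' * a = a * c := by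
  induction c using DirectSum.Decomposition.inductionOn 𝒜 with
  | zero => exact ⟨0, by simp⟩
  | homogeneous m => exact h _ _ m.2
  | add c d hc hd =>
    obtain ⟨c', hc⟩ := hc
    obtain ⟨d', hd⟩ := hd
    exact ⟨c' + d', by rw [add_mul, mul_add, hc, hd]⟩

theorem forall_exists_mul_eq_mul_of_homogeneous' {a : R}
    (h : ∀ i, ∀ m ∈ 𝒜 i, ∃ m', a * m' = m * a) (c : R) : ∃ c', a * c' = c * a := by
  induction c using DirectSum.Decomposition.inductionOn 𝒜 with
  | zero => exact ⟨0, by simp⟩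
  | homogeneous m => exact h _ _ m.2
  | add c d hc hd =>
    obtain ⟨c', hc⟩ := hc
    obtain ⟨d', hd⟩ := hd
    exact ⟨c' + d', by rw [add_mul, mul_add, hc, hd]⟩

end DirectSum.Decomposition

/-- In a simple associative Γ-graded commutative algebra `A` over a field
(with commutation rule `a*b = (-1)^⟨ā,b̄⟩ b*a` for a biadditive map `⟨,⟩ : Γ×Γ → ℤ/2`),
every nonzero homogeneous element is neither a left nor a right zero divisor. -/
theorem stmt0 {Γ : Type*} [AddCommGroup Γ] [DecidableEq Γ]
    {K : Type*} [Field K] {A : Type*} [Ring A] [Algebra K A]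
    (bil : Γ →+ Γ →+ ZMod 2)
    (𝒜 : Γ → Submodule K A) (hgr : GradedAlgebra 𝒜)
    (hcomm : ∀ (γ γ' : Γ) (a b : A), a ∈ 𝒜 γ → b ∈ 𝒜 γ' →
      a * b = (-1 : A) ^ (bil γ γ').val * (b * a))
    (hsimple : IsSimpleRing A)
    {γ : Γ} {a : A} (ha : a ∈ 𝒜 γ) (ha0 : a ≠ 0) :
    (∀ b : A, a * b = 0 → b = 0) ∧ (∀ b : A, b * a = 0 → b = 0) := by
  have hright := DirectSum.Decomposition.forall_exists_mul_eq_mul_of_homogeneous 𝒜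
    (a := a) fun γ' m hm => ⟨_, by rw [hcomm γ γ' a m ha hm, mul_assoc]⟩
  have hleft := DirectSum.Decomposition.forall_exists_mul_eq_mul_of_homogeneous' 𝒜
    (a := a) fun γ' m hm => ⟨_, by
      rw [hcomm γ' γ m a hm ha, ← mul_assoc, ((Commute.neg_one_right a).pow_right _).eq,
        mul_assoc]⟩
  exact ⟨fun _ => IsSimpleRing.eq_zero_of_ne_zero_of_mul_left_eq_zero ha0 hright,
    fun _ => IsSimpleRing.eq_zero_of_ne_zero_of_mul_right_eq_zero ha0 hleft⟩
end

section
/- If A is a finite-dimensional simple associative Γ-graded commutative algebra over ℂ, then the degree-zero component A₀ is isomorphic to ℂ (i.e., A₀ = ℂ·1). -/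
/-- If `A` is a finite-dimensional simple associative Γ-graded commutative
algebra over ℂ, then the degree-zero component `A₀` is `ℂ·1` (isomorphic to ℂ). -/
theorem stmt2 {Γ : Type*} [AddCommGroup Γ] [DecidableEq Γ]
    {A : Type*} [Ring A] [Algebra ℂ A] [FiniteDimensional ℂ A]
    (bil : Γ →+ Γ →+ ZMod 2)
    (𝒜 : Γ → Submodule ℂ A) (hgr : GradedAlgebra 𝒜)
    (hcomm : ∀ (γ γ' : Γ) (a b : A), a ∈ 𝒜 γ → b ∈ 𝒜 γ' →
      a * b = (-1 : A) ^ (bil γ γ').val * (b * a))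
    (hsimple : IsSimpleRing A) :
    𝒜 (0 : Γ) = Submodule.span ℂ {(1 : A)} := by
  haveI := hgr
  have htop : (⨆ γ, 𝒜 γ) = ⊤ :=
    (DirectSum.Decomposition.isInternal 𝒜).submodule_iSup_eq_top
  -- every element of 𝒜 0 is central
  have hcentral : ∀ a ∈ 𝒜 0, a ∈ Subring.center A := by
    intro a ha
    rw [Subring.mem_center_iff]
    intro b
    have hb : b ∈ (⨆ γ, 𝒜 γ) := htop ▸ Submodule.mem_top
    induction hb using Submodule.iSup_induction' with
    | mem γ x hx =>
      have := hcomm 0 γ a x ha hx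
      have hz : bil 0 γ = 0 := by simp
      rw [hz] at this
      simpa using this.symm
    | zero => simp
    | add x _ y _ hx hy => rw [mul_add, add_mul, hx, hy]
  have hfield : IsField (Subring.center A) := IsSimpleRing.isField_center A
  apply le_antisymm
  · intro a ha
    have hint : IsIntegral ℂ a := Algebra.IsIntegral.isIntegral a
    set p := minpoly ℂ a with hp
    have hp0 : p ≠ 0 := minpoly.ne_zero hint
    have hdeg : 0 < p.degree :=
      Polynomial.natDegree_pos_iff_degree_pos.mp (minpoly.natDegree_pos hint)
    obtain ⟨μ, hroot⟩ := Complex.exists_root hdeg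
    obtain ⟨q, hq⟩ := Polynomial.dvd_iff_isRoot.mpr hroot
    have haev : Polynomial.aeval a p = 0 := minpoly.aeval ℂ a
    rw [hq] at haev
    rw [map_mul] at haev
    simp only [map_sub, Polynomial.aeval_X, Polynomial.aeval_C] at haev
    by_cases hne : a - algebraMap ℂ A μ = 0
    · have : a = algebraMap ℂ A μ := sub_eq_zero.mp hne
      rw [this]
      refine Submodule.mem_span_singleton.mpr ⟨μ, ?_⟩
      rw [Algebra.smul_def, mul_one]
    · exfalso
      -- a - μ is central and nonzero, hence invertible
      have hc : a - algebraMap ℂ A μ ∈ Subring.center A := by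
        refine Subring.sub_mem _ (hcentral a ha) ?_
        exact Subring.mem_center_iff.mpr fun g => (Algebra.commutes μ g).symm
      obtain ⟨c, hcinv⟩ := hfield.mul_inv_cancel (a := ⟨_, hc⟩)
        (by simpa [Subtype.ext_iff] using hne)
      have hcinv' : (a - algebraMap ℂ A μ) * (c : A) = 1 := by
        simpa using congrArg Subtype.val hcinv
      have hcomm' : (c : A) * (a - algebraMap ℂ A μ) = 1 := by
        rw [← hcinv', (Subring.mem_center_iff.mp c.2 _)]
      have hq0 : Polynomial.aeval a q = 0 := by
        calc Polynomial.aeval a q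
            = ((c : A) * (a - algebraMap ℂ A μ)) * Polynomial.aeval a q := by
              rw [hcomm', one_mul]
          _ = (c : A) * ((a - algebraMap ℂ A μ) * Polynomial.aeval a q) := mul_assoc _ _ _
          _ = 0 := by rw [haev, mul_zero]
      have hqne : q ≠ 0 := by
        intro h; rw [h, mul_zero] at hq; exact hp0 hq
      have := minpoly.degree_le_of_ne_zero ℂ a hqne hq0
      rw [← hp, hq, Polynomial.degree_mul, Polynomial.degree_X_sub_C] at this
      have hqd : q.degree ≠ ⊥ := Polynomial.degree_eq_bot.not.mpr hqne
      -- 1 + deg q ≤ deg q : contradiction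
      rcases Polynomial.degree_eq_natDegree hqne with h'
      rw [h'] at this
      norm_cast at this
      omega
  · rw [Submodule.span_le, Set.singleton_subset_iff]
    exact SetLike.one_mem_graded 𝒜
end

section
/- If A is a finite-dimensional simple associative Γ-graded commutative algebra over ℝ, then the degree-zero component A₀ is isomorphic as an ℝ-algebra to ℝ or ℂ. -/
/-!
Degree-zero elements pair trivially with every degree, so graded commutativity makes them
commute with all homogeneous elements, hence with everything: `A₀` lies in the center of `A`.
The center of a simple ring is a field, so the finite-dimensional commutative algebra `A₀` has
no zero divisors and is itself a finite field extension of `ℝ`, i.e. `ℝ` or `ℂ`.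
-/

theorem DirectSum.Decomposition.commute_of_forall_homogeneous {ι R σ : Type*} [DecidableEq ι]
    [Semiring R] [SetLike σ R] [AddSubmonoidClass σ R] (𝒜 : ι → σ) [DirectSum.Decomposition 𝒜]
    {x : R} (hx : ∀ i, ∀ a ∈ 𝒜 i, Commute a x) (b : R) : Commute b x := by
  induction b using DirectSum.Decomposition.inductionOn 𝒜 with
  | zero => exact Commute.zero_left x
  | homogeneous a => exact hx _ a a.2
  | add a b ha hb => exact ha.add_left hb

theorem Subalgebra.isField_of_le_center {K A : Type*} [Field K] [Ring A] [Algebra K A]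
    [IsSimpleRing A] {S : Subalgebra K A} (hS : S ≤ Subalgebra.center K A)
    [FiniteDimensional K S] : IsField S := by
  let : Field (Subring.center A) := (IsSimpleRing.isField_center A).toField
  have hS' : S.toSubring ≤ Subring.center A := hS
  have : IsDomain S := (Subring.inclusion_injective hS').isDomain (Subring.inclusion hS')
  let := divisionRingOfFiniteDimensional K S
  exact
    { exists_pair_ne := exists_pair_ne S
      mul_comm := fun a b => Subtype.ext (Subalgebra.mem_center_iff.1 (hS b.2) a)
      mul_inv_cancel := fun ha => ⟨_, mul_inv_cancel₀ ha⟩ }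

/-- If `A` is a finite-dimensional simple associative Γ-graded commutative
algebra over ℝ, then the degree-zero component `A₀` is isomorphic as an ℝ-algebra
to ℝ or to ℂ. -/
theorem stmt3 {Γ : Type*} [AddCommGroup Γ] [DecidableEq Γ]
    {A : Type*} [Ring A] [Algebra ℝ A] [FiniteDimensional ℝ A]
    (bil : Γ →+ Γ →+ ZMod 2)
    (𝒜 : Γ → Submodule ℝ A) (hgr : GradedAlgebra 𝒜)
    (hcomm : ∀ (γ γ' : Γ) (a b : A), a ∈ 𝒜 γ → b ∈ 𝒜 γ' →
      a * b = (-1 : A) ^ (bil γ γ').val * (b * a))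
    (hsimple : IsSimpleRing A) :
    ∃ S : Subalgebra ℝ A, Subalgebra.toSubmodule S = 𝒜 (0 : Γ) ∧
      (Nonempty (S ≃ₐ[ℝ] ℝ) ∨ Nonempty (S ≃ₐ[ℝ] ℂ)) := by
  refine ⟨SetLike.GradeZero.subalgebra 𝒜, rfl, ?_⟩
  have hcentral : SetLike.GradeZero.subalgebra 𝒜 ≤ Subalgebra.center ℝ A := fun x hx =>
    Subalgebra.mem_center_iff.2 fun b =>
      DirectSum.Decomposition.commute_of_forall_homogeneous 𝒜
        (fun i a ha => (by simpa using (hcomm 0 i x a hx ha).symm : a * x = x * a)) b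
  let := (Subalgebra.isField_of_le_center hcentral).toField
  exact Real.nonempty_algEquiv_or _
end

section
/- If A is a finite-dimensional simple associative (ℤ/2)ⁿ-graded commutative algebra over ℂ (with respect to the standard scalar product on (ℤ/2)ⁿ), then every nonzero homogeneous component A_γ is one-dimensional, and contains an element α with α² = 1. -/
/-!
Elements of degree `0` are central, and the centre of a finite-dimensional simple algebra over an
algebraically closed field `K` is `K` itself; since `γ + γ = 0`, every product of two elements of
`A_γ` is therefore a scalar. A nonzero homogeneous `a` satisfies `A a ⊆ a A`, so its left
annihilator is a two-sided ideal, hence zero. In particular `a * a = c` with `c ≠ 0`, so every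
`b ∈ A_γ` equals `c⁻¹ (b a) a ∈ K a`, and `c^(-1/2) a` squares to `1`.
-/

theorem IsSimpleRing.eq_zero_of_mul_eq_zero {A : Type*} [Ring A] [IsSimpleRing A] {a x : A}
    (ha : a ≠ 0) (hnormal : ∀ y, a ∣ y * a) (hx : x * a = 0) : x = 0 := by
  -- the left annihilator of `a` is a two-sided ideal since `A a ⊆ a A`
  let I : TwoSidedIdeal A := .mk' {x | x * a = 0} (zero_mul a)
    (fun hx hy => by simp_all [add_mul]) (fun hx => by simp_all [neg_mul])
    (fun hy => by simp_all [mul_assoc])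
    (fun {x y} (hx : x * a = 0) => by
      obtain ⟨c, hc⟩ := hnormal y
      change x * y * a = 0
      rw [mul_assoc, hc, ← mul_assoc, hx, zero_mul])
  by_contra hx0
  have h1 : (1 : A) ∈ I := IsSimpleRing.one_mem_of_ne_zero_mem I hx0 (by simpa [I] using hx)
  exact ha (by simpa [I] using h1)

theorem IsSimpleRing.exists_algebraMap_eq_of_forall_commute {K A : Type*} [Field K]
    [IsAlgClosed K] [Ring A] [Algebra K A] [FiniteDimensional K A] [IsSimpleRing A] {z : A}
    (hz : ∀ y, Commute z y) : ∃ c, algebraMap K A c = z := by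
  have : IsDomain (Subalgebra.center K A) := (IsSimpleRing.isField_center A).isDomain
  obtain ⟨c, hc⟩ := (IsAlgClosed.algebraMap_bijective_of_isIntegral (k := K)
    (K := Subalgebra.center K A)).2 ⟨z, Subalgebra.mem_center_iff.2 fun y => (hz y).eq.symm⟩
  exact ⟨c, congrArg Subtype.val hc⟩

theorem mul_mem_graded_zero_of_mem {n : ℕ} {R A : Type*} [CommSemiring R] [Semiring A]
    [Algebra R A] {𝒜 : (Fin n → ZMod 2) → Submodule R A} [SetLike.GradedMonoid 𝒜]
    {γ : Fin n → ZMod 2} {a b : A} (ha : a ∈ 𝒜 γ) (hb : b ∈ 𝒜 γ) : a * b ∈ 𝒜 0 := by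
  have hγ : γ + γ = 0 := funext fun i => CharTwo.add_self_eq_zero (γ i)
  exact hγ ▸ SetLike.mul_mem_graded ha hb

def IsGradedCommutative {n : ℕ} {R A : Type*} [CommSemiring R] [Ring A] [Algebra R A]
    (𝒜 : (Fin n → ZMod 2) → Submodule R A) : Prop :=
  ∀ (γ γ' : Fin n → ZMod 2) (a b : A), a ∈ 𝒜 γ → b ∈ 𝒜 γ' →
    a * b = (-1 : A) ^ (∑ i, γ i * γ' i).val * (b * a)

namespace IsGradedCommutative

variable {n : ℕ} {A : Type*} [Ring A]

section Commutation

variable {R : Type*} [CommSemiring R] [Algebra R A] {𝒜 : (Fin n → ZMod 2) → Submodule R A}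
  [GradedAlgebra 𝒜]

theorem commute_of_mem_zero (h𝒜 : IsGradedCommutative 𝒜) {z : A} (hz : z ∈ 𝒜 0) (y : A) :
    Commute z y := by
  induction y using DirectSum.Decomposition.inductionOn 𝒜 with
  | zero => exact Commute.zero_right z
  | homogeneous y => exact (by simpa using h𝒜 0 _ z y hz y.2 : z * y = y * z)
  | add y y' hy hy' => exact hy.add_right hy'

theorem dvd_mul_of_mem (h𝒜 : IsGradedCommutative 𝒜) {γ : Fin n → ZMod 2} {a : A}
    (ha : a ∈ 𝒜 γ) (y : A) : a ∣ y * a := by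
  induction y using DirectSum.Decomposition.inductionOn 𝒜 with
  | zero => rw [zero_mul]; exact dvd_zero a
  | homogeneous y =>
    rw [h𝒜 _ γ y a y.2 ha]
    rcases neg_one_pow_eq_or A (∑ i, _ * γ i).val with h | h <;> rw [h]
    · exact ⟨y, one_mul _⟩
    · exact ⟨-y, by rw [neg_one_mul, mul_neg]⟩
  | add y y' hy hy' => rw [add_mul]; exact dvd_add hy hy'

end Commutation

section AlgClosed

variable {K : Type*} [Field K] [IsAlgClosed K] [Algebra K A] [FiniteDimensional K A] [IsSimpleRing A]
  {𝒜 : (Fin n → ZMod 2) → Submodule K A} [GradedAlgebra 𝒜] {γ : Fin n → ZMod 2} {a : A}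

theorem exists_algebraMap_eq_mul (h𝒜 : IsGradedCommutative 𝒜) {b : A} (ha : a ∈ 𝒜 γ)
    (hb : b ∈ 𝒜 γ) : ∃ c, algebraMap K A c = a * b :=
  IsSimpleRing.exists_algebraMap_eq_of_forall_commute
    (h𝒜.commute_of_mem_zero (mul_mem_graded_zero_of_mem ha hb))

theorem exists_ne_zero_algebraMap_eq_mul_self (h𝒜 : IsGradedCommutative 𝒜) (ha : a ∈ 𝒜 γ)
    (ha0 : a ≠ 0) : ∃ c ≠ 0, algebraMap K A c = a * a := by
  obtain ⟨c, hc⟩ := h𝒜.exists_algebraMap_eq_mul ha ha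
  refine ⟨c, ?_, hc⟩
  rintro rfl
  rw [map_zero, eq_comm] at hc
  exact ha0 (IsSimpleRing.eq_zero_of_mul_eq_zero ha0 (h𝒜.dvd_mul_of_mem ha) hc)

theorem eq_span_singleton (h𝒜 : IsGradedCommutative 𝒜) (ha : a ∈ 𝒜 γ) (ha0 : a ≠ 0) :
    𝒜 γ = K ∙ a := by
  obtain ⟨c, hc0, hc⟩ := h𝒜.exists_ne_zero_algebraMap_eq_mul_self ha ha0
  refine le_antisymm (fun b hb => ?_) ((Submodule.span_singleton_le_iff_mem _ _).2 ha)
  obtain ⟨μ, hμ⟩ := h𝒜.exists_algebraMap_eq_mul hb ha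
  have hcb : c • b = μ • a := by
    rw [Algebra.smul_def, Algebra.smul_def, Algebra.commutes, hc, hμ, mul_assoc]
  exact Submodule.mem_span_singleton.2 ⟨c⁻¹ * μ, by rw [mul_smul, ← hcb, inv_smul_smul₀ hc0]⟩

theorem exists_mul_self_eq_one (h𝒜 : IsGradedCommutative 𝒜) (ha : a ∈ 𝒜 γ) (ha0 : a ≠ 0) :
    ∃ α ∈ 𝒜 γ, α * α = 1 := by
  obtain ⟨c, hc0, hc⟩ := h𝒜.exists_ne_zero_algebraMap_eq_mul_self ha ha0
  obtain ⟨d, hd⟩ := IsAlgClosed.exists_eq_mul_self c⁻¹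
  refine ⟨d • a, Submodule.smul_mem _ d ha, ?_⟩
  rw [smul_mul_smul_comm, ← hd, ← hc, Algebra.smul_def, ← map_mul, inv_mul_cancel₀ hc0, map_one]

end AlgClosed

end IsGradedCommutative

/-- If `A` is a finite-dimensional simple associative `(ℤ/2)ⁿ`-graded
commutative ℂ-algebra (with respect to the standard scalar product), then every
nonzero homogeneous component `A_γ` is one-dimensional and contains an element `α`
with `α² = 1`. -/
theorem stmt4 {n : ℕ} {A : Type*} [Ring A] [Algebra ℂ A] [FiniteDimensional ℂ A]
    (𝒜 : (Fin n → ZMod 2) → Submodule ℂ A) (hgr : GradedAlgebra 𝒜)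
    (hcomm : ∀ (γ γ' : Fin n → ZMod 2) (a b : A), a ∈ 𝒜 γ → b ∈ 𝒜 γ' →
      a * b = (-1 : A) ^ (∑ i, γ i * γ' i).val * (b * a))
    (hsimple : IsSimpleRing A) :
    ∀ γ : Fin n → ZMod 2, 𝒜 γ ≠ ⊥ →
      Module.finrank ℂ (𝒜 γ) = 1 ∧ ∃ α ∈ 𝒜 γ, α * α = 1 := by
  have h𝒜 : IsGradedCommutative 𝒜 := hcomm
  intro γ hγ
  obtain ⟨a, ha, ha0⟩ := (Submodule.ne_bot_iff _).1 hγ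
  refine ⟨?_, h𝒜.exists_mul_self_eq_one ha ha0⟩
  rw [h𝒜.eq_span_singleton ha ha0]
  exact finrank_span_singleton ha0
end

section
/- For every symmetric biadditive form β : (ℤ/2)ⁿ × (ℤ/2)ⁿ → ℤ/2 there exist an integer N ≤ 2n and a group homomorphism σ : (ℤ/2)ⁿ → (ℤ/2)ᴺ such that ⟨σ(x), σ(y)⟩ = β(x,y) for all x, y, where ⟨,⟩ is the standard scalar product on (ℤ/2)ᴺ. -/
/-!
Over `𝔽₂` the form `β` is `x ⬝ᵥ B *ᵥ y` for its Gram matrix `B`, so it suffices to write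
`B = Vᵀ V` with `V` having at most `2n` rows, and then `σ = (V *ᵥ ·)`. Such a `V` is built one
index `l` at a time: for any row `r` the vectors `e = (1 + r l) • eₗ` and `a = r + e` satisfy
`(a aᵀ + e eᵀ) l = r`, because `a l = 1` and `c² = c` in `𝔽₂`; they agree with `r` and `0` off `l`,
so `B - a aᵀ - e eᵀ` is symmetric with row and column `l` zero, and induction on the support of
`B` applies.
-/

open Matrix

namespace Matrix

variable {ι κ R : Type*}

theorem transpose_mul_self_of_vecCons [NonUnitalNonAssocSemiring R] {N : ℕ} (a : ι → R)
    (v : Fin N → ι → R) :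
    (of (vecCons a v))ᵀ * of (vecCons a v) = vecMulVec a a + (of v)ᵀ * of v := by
  ext i j
  simp only [mul_apply, Fin.sum_univ_succ, transpose_apply, of_apply, add_apply, vecMulVec_apply]
  rfl

theorem exists_vecMulVec_add_vecMulVec_row_eq [DecidableEq ι] (r : ι → ZMod 2) (l : ι) :
    ∃ a e : ι → ZMod 2, (∀ i ≠ l, a i = r i ∧ e i = 0) ∧
      (vecMulVec a a + vecMulVec e e) l = r := by
  refine ⟨r + Pi.single l (1 + r l), Pi.single l (1 + r l), fun i hi => by simp [hi], ?_⟩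
  ext j
  simp only [add_apply, vecMulVec_apply, Pi.add_apply, Pi.single_apply, if_true]
  split_ifs with hj
  · subst hj
    generalize r j = c
    decide +revert
  · generalize r l = c
    generalize r j = d
    decide +revert

theorem dotProduct_mulVec_mulVec [Fintype ι] [Fintype κ] [CommSemiring R]
    (V : Matrix κ ι R) (x y : ι → R) :
    (V *ᵥ x) ⬝ᵥ (V *ᵥ y) = x ⬝ᵥ (Vᵀ * V) *ᵥ y := by
  rw [dotProduct_mulVec, dotProduct_mulVec, ← vecMul_vecMul, vecMul_transpose]

theorem exists_transpose_mul_self_eq_of_forall_notMem [DecidableEq ι] (s : Finset ι)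
    {b : Matrix ι ι (ZMod 2)} (hb : b.IsSymm) (hs : ∀ i ∉ s, ∀ j, b i j = 0) :
    ∃ N ≤ 2 * s.card, ∃ v : Fin N → ι → ZMod 2, (of v)ᵀ * of v = b := by
  induction s using Finset.induction_on generalizing b with
  | empty =>
    refine ⟨0, le_rfl, 0, ?_⟩
    ext i j
    simp [hs i (Finset.notMem_empty i)]
  | insert l t hl ih =>
    obtain ⟨a, e, hae, hrow⟩ := exists_vecMulVec_add_vecMulVec_row_eq (b l) l
    set M := vecMulVec a a + vecMulVec e e
    have hM : M.IsSymm := by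
      simp only [M, IsSymm, transpose_add, transpose_vecMulVec]
    have hrest : ∀ i ∉ t, ∀ j, (b - M) i j = 0 := by
      intro i hi j
      by_cases hil : i = l
      · subst hil
        simp [hrow]
      · have hi' : i ∉ insert l t := by simp [hi, hil]
        simp [M, hs i hi', vecMulVec_apply, (hae i hil).1, (hae i hil).2, ← hb.apply l i]
    obtain ⟨N, hN, v, hv⟩ := ih (hb.sub hM) hrest
    refine ⟨N + 2, by rw [Finset.card_insert_of_notMem hl]; omega, vecCons a (vecCons e v), ?_⟩
    rw [transpose_mul_self_of_vecCons, transpose_mul_self_of_vecCons, hv]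
    simp only [M]
    abel

theorem IsSymm.exists_transpose_mul_self_eq [Fintype ι] [DecidableEq ι]
    {b : Matrix ι ι (ZMod 2)} (hb : b.IsSymm) :
    ∃ N ≤ 2 * Fintype.card ι, ∃ v : Fin N → ι → ZMod 2, (of v)ᵀ * of v = b :=
  exists_transpose_mul_self_eq_of_forall_notMem Finset.univ hb (by simp)

end Matrix

theorem AddMonoidHom.apply_apply_eq_dotProduct_mulVec {ι κ : Type*} [Fintype ι] [Fintype κ]
    [DecidableEq ι] [DecidableEq κ] {m : ℕ}
    (β : (ι → ZMod m) →+ (κ → ZMod m) →+ ZMod m) (x : ι → ZMod m) (y : κ → ZMod m) :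
    β x y = x ⬝ᵥ (of fun i j => β (Pi.single i 1) (Pi.single j 1)) *ᵥ y := by
  let B : (ι → ZMod m) →ₗ[ZMod m] (κ → ZMod m) →ₗ[ZMod m] ZMod m :=
    LinearMap.mk₂ (ZMod m) (β · ·) (by simp) (fun c x y => by simp [ZMod.map_smul β c x])
      (by simp) (fun c x y => ZMod.map_smul (β x) c y)
  have hB : LinearMap.toMatrix₂' (ZMod m) B = of fun i j => β (Pi.single i 1) (Pi.single j 1) :=
    Matrix.ext fun i j => LinearMap.toMatrix₂'_apply B i j
  rw [← hB, ← toLinearMap₂'_apply', toLinearMap₂'_toMatrix']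
  rfl

/-- For every symmetric biadditive form `β : (ℤ/2)ⁿ × (ℤ/2)ⁿ → ℤ/2` there
exist `N ≤ 2n` and a group homomorphism `σ : (ℤ/2)ⁿ → (ℤ/2)ᴺ` such that
`⟨σ x, σ y⟩ = β x y` for all `x, y`, where `⟨,⟩` is the standard scalar product. -/
theorem stmt5 {n : ℕ} (β : (Fin n → ZMod 2) →+ (Fin n → ZMod 2) →+ ZMod 2)
    (hsymm : ∀ x y, β x y = β y x) :
    ∃ N ≤ 2 * n, ∃ σ : (Fin n → ZMod 2) →+ (Fin N → ZMod 2),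
      ∀ x y, (∑ i, σ x i * σ y i) = β x y := by
  set B : Matrix (Fin n) (Fin n) (ZMod 2) := of fun i j => β (Pi.single i 1) (Pi.single j 1)
  have hB : B.IsSymm := IsSymm.ext fun i j => hsymm _ _
  obtain ⟨N, hN, v, hv⟩ := hB.exists_transpose_mul_self_eq
  refine ⟨N, by rwa [Fintype.card_fin] at hN, (of v).mulVecLin.toAddMonoidHom, fun x y => ?_⟩
  change (of v *ᵥ x) ⬝ᵥ (of v *ᵥ y) = _
  rw [dotProduct_mulVec_mulVec, hv, β.apply_apply_eq_dotProduct_mulVec]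
end

section
/- The tiny Kaplansky superalgebra K₃, the 3-dimensional ℤ/2-graded algebra with even basis element ε and odd basis elements a, b, and multiplication ε·ε = ε, ε·a = a·ε = (1/2)a, ε·b = b·ε = (1/2)b, a·b = -b·a = ε, a·a = b·b = 0, is a simple algebra (it has no nonzero proper two-sided ideal). -/
/-! The idempotent `ε = (1,0,0)` acts on the left by `1` on the even part and by `1/2` on the odd
part, so `2 ε y - y = y₁ ε`. Hence a left ideal contains the `ε`-component of each of its
elements, and a right ideal containing `ε` contains every `y = 2 ε y - y₁ ε`. A nonzero ideal does
contain `ε`: for `y ≠ 0` one of `y`, `y a`, `y b` has nonzero `ε`-component, namely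
`y₁`, `-y₃`, `y₂`. -/

/-- The multiplication of the tiny Kaplansky superalgebra `K₃` on coordinates with
respect to the basis `{ε, a, b}` (`ε` even, `a, b` odd):
`ε·ε = ε`, `ε·a = a·ε = (1/2)a`, `ε·b = b·ε = (1/2)b`, `a·b = -b·a = ε`,
`a·a = b·b = 0`. -/
def K3mul {K : Type*} [Field K] (x y : K × K × K) : K × K × K :=
  (x.1 * y.1 + x.2.1 * y.2.2 - x.2.2 * y.2.1,
   (1 / 2 : K) * (x.1 * y.2.1 + x.2.1 * y.1),
   (1 / 2 : K) * (x.1 * y.2.2 + x.2.2 * y.1))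

section K3

variable {K : Type*} [Field K]

theorem two_smul_K3mul_eps_sub [NeZero (2 : K)] (y : K × K × K) :
    (2 : K) • K3mul (1, 0, 0) y - y = y.1 • ((1, 0, 0) : K × K × K) := by
  ext <;> simp [K3mul, ← mul_assoc, mul_inv_cancel₀ (two_ne_zero (α := K))]; ring

variable {I : Submodule K (K × K × K)}

theorem fst_smul_eps_mem [NeZero (2 : K)] (hL : ∀ x ∈ I, ∀ y, K3mul y x ∈ I)
    {y : K × K × K} (hy : y ∈ I) : y.1 • ((1, 0, 0) : K × K × K) ∈ I := by
  rw [← two_smul_K3mul_eps_sub]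
  exact I.sub_mem (I.smul_mem _ (hL y hy _)) hy

theorem eps_mem_of_fst_ne_zero [NeZero (2 : K)] (hL : ∀ x ∈ I, ∀ y, K3mul y x ∈ I)
    {y : K × K × K} (hy : y ∈ I) (hy₁ : y.1 ≠ 0) : ((1, 0, 0) : K × K × K) ∈ I :=
  (I.smul_mem_iff hy₁).1 (fst_smul_eps_mem hL hy)

theorem eps_mem_of_ne_bot [NeZero (2 : K)] (hL : ∀ x ∈ I, ∀ y, K3mul y x ∈ I)
    (hR : ∀ x ∈ I, ∀ y, K3mul x y ∈ I) (hI : I ≠ ⊥) : ((1, 0, 0) : K × K × K) ∈ I := by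
  obtain ⟨y, hy, hy0⟩ := Submodule.exists_mem_ne_zero_of_ne_bot hI
  obtain ⟨y₁, y₂, y₃⟩ := y
  by_cases h₁ : y₁ = 0
  · by_cases h₃ : y₃ = 0
    · have h₂ : y₂ ≠ 0 := by rintro rfl; simp_all
      exact eps_mem_of_fst_ne_zero hL (hR _ hy (0, 0, 1)) (by simpa [K3mul])
    · exact eps_mem_of_fst_ne_zero hL (hR _ hy (0, 1, 0)) (by simpa [K3mul])
  · exact eps_mem_of_fst_ne_zero hL hy h₁

theorem eq_top_of_eps_mem [NeZero (2 : K)] (hR : ∀ x ∈ I, ∀ y, K3mul x y ∈ I)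
    (hε : ((1, 0, 0) : K × K × K) ∈ I) : I = ⊤ := by
  refine Submodule.eq_top_iff'.2 fun y => ?_
  have hy : y = (2 : K) • K3mul (1, 0, 0) y - y.1 • ((1, 0, 0) : K × K × K) := by
    rw [← two_smul_K3mul_eps_sub, sub_sub_cancel]
  rw [hy]
  exact I.sub_mem (I.smul_mem _ (hR _ hε y)) (I.smul_mem _ hε)

end K3

/-- The tiny Kaplansky superalgebra `K₃` over a field of characteristic
zero is simple: it has no nonzero proper two-sided ideal (an ideal being a linear
subspace stable under left and right multiplication by arbitrary elements). -/
theorem stmt15 {K : Type*} [Field K] [CharZero K]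
    (I : Submodule K (K × K × K))
    (hI : ∀ x ∈ I, ∀ y : K × K × K, K3mul x y ∈ I ∧ K3mul y x ∈ I) :
    I = ⊥ ∨ I = ⊤ := by
  have hL : ∀ x ∈ I, ∀ y, K3mul y x ∈ I := fun x hx y => (hI x hx y).2
  have hR : ∀ x ∈ I, ∀ y, K3mul x y ∈ I := fun x hx y => (hI x hx y).1
  exact or_iff_not_imp_left.2 fun hbot => eq_top_of_eps_mem hR (eps_mem_of_ne_bot hL hR hbot)
end

section
/- Let A be a simple ℤ/2-graded commutative algebra with A⁰ = ℂ·ε admitting a nontrivial odd derivation T. Then T(ε) ≠ 0; moreover, setting a = T(ε), one has ε·a = (1/2)a and T(a) = 0. -/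
/-- Let `A` be a simple ℤ/2-graded commutative ℂ-algebra with
`A⁰ = ℂ·ε` (`ε² = ε`) admitting a nontrivial odd derivation `T`.  Then `T ε ≠ 0`;
moreover, setting `a = T ε`, one has `ε·a = (1/2)a` and `T a = 0`. -/
theorem stmt17 {A : Type*} [AddCommGroup A] [Module ℂ A]
    (mul : A →ₗ[ℂ] A →ₗ[ℂ] A)
    (A0 A1 : Submodule ℂ A) (hcompl : IsCompl A0 A1)
    (h00 : ∀ x ∈ A0, ∀ y ∈ A0, mul x y ∈ A0)
    (h01 : ∀ x ∈ A0, ∀ y ∈ A1, mul x y ∈ A1)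
    (h10 : ∀ x ∈ A1, ∀ y ∈ A0, mul x y ∈ A1)
    (h11 : ∀ x ∈ A1, ∀ y ∈ A1, mul x y ∈ A0)
    (hcomm0 : ∀ x ∈ A0, ∀ y : A, mul x y = mul y x)
    (hcomm1 : ∀ x ∈ A1, ∀ y ∈ A1, mul x y = -mul y x)
    (ε : A) (hε0 : ε ≠ 0) (hA0 : A0 = Submodule.span ℂ {ε})
    (hεsq : mul ε ε = ε)
    (hsimple : ∀ I : Submodule ℂ A,
      (∀ x ∈ I, ∀ y : A, mul x y ∈ I ∧ mul y x ∈ I) → I = ⊥ ∨ I = ⊤)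
    (T : A →ₗ[ℂ] A)
    (hT0 : ∀ x ∈ A0, T x ∈ A1) (hT1 : ∀ x ∈ A1, T x ∈ A0)
    (hLeib0 : ∀ x ∈ A0, ∀ y : A, T (mul x y) = mul (T x) y + mul x (T y))
    (hLeib1 : ∀ x ∈ A1, ∀ y : A, T (mul x y) = mul (T x) y - mul x (T y))
    (hTne : T ≠ 0) :
    T ε ≠ 0 ∧ mul ε (T ε) = (1 / 2 : ℂ) • T ε ∧ T (T ε) = 0 := by
  -- bilinearity helpers
  have mul_smul_left : ∀ (c : ℂ) (u v : A), mul (c • u) v = c • mul u v := by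
    intro c u v; simp
  have mul_smul_right : ∀ (c : ℂ) (u v : A), mul u (c • v) = c • mul u v := by
    intro c u v; simp
  have mul_add_left : ∀ u v w : A, mul (u + v) w = mul u w + mul v w := by
    intro u v w; simp
  have mul_add_right : ∀ u v w : A, mul u (v + w) = mul u v + mul u w := by
    intro u v w; simp
  have hεA0 : ε ∈ A0 := by
    rw [hA0]; exact Submodule.mem_span_singleton_self ε
  have memA0 : ∀ z ∈ A0, ∃ c : ℂ, z = c • ε := by
    intro z hz
    rw [hA0, Submodule.mem_span_singleton] at hz
    obtain ⟨c, hc⟩ := hz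
    exact ⟨c, hc.symm⟩
  have hinf : ∀ z, z ∈ A0 → z ∈ A1 → z = 0 := by
    intro z h0 h1
    have : z ∈ A0 ⊓ A1 := ⟨h0, h1⟩
    rw [hcompl.inf_eq_bot] at this
    simpa using this
  -- squares of odd elements vanish
  have hsq1 : ∀ z ∈ A1, mul z z = 0 := by
    intro z hz
    have h := hcomm1 z hz z hz
    have h1 : mul z z + mul z z = 0 := by
      nth_rewrite 1 [h]; abel
    have h2 : (2 : ℂ) • mul z z = 0 := by
      rw [two_smul]; exact h1
    rcases smul_eq_zero.mp h2 with h' | h'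
    · norm_num at h'
    · exact h'
  -- Part 2 : mul ε (T ε) = (1/2) • T ε
  have part2 : mul ε (T ε) = (1 / 2 : ℂ) • T ε := by
    have h := hLeib0 ε hεA0 ε
    rw [hεsq] at h
    rw [← hcomm0 ε hεA0 (T ε)] at h
    have h2 : T ε = (2 : ℂ) • mul ε (T ε) := by
      rw [two_smul]; exact h
    have h3 : (1 / 2 : ℂ) • T ε = (1 / 2 : ℂ) • ((2 : ℂ) • mul ε (T ε)) := by
      rw [← h2]
    rw [smul_smul] at h3
    norm_num at h3
    exact h3.symm
  -- Part 3 : T (T ε) = 0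
  have ha1 : T ε ∈ A1 := hT0 ε hεA0
  have part3 : T (T ε) = 0 := by
    obtain ⟨c, hc⟩ := memA0 (T (T ε)) (hT1 _ ha1)
    have h := hLeib1 (T ε) ha1 ε
    rw [← hcomm0 ε hεA0 (T ε), part2] at h
    rw [map_smul, hc, hsq1 _ ha1, sub_zero] at h
    rw [mul_smul_left, hεsq, smul_smul] at h
    have h0 : ((1 / 2 : ℂ) * c - c) • ε = 0 := by
      rw [sub_smul, h, sub_self]
    rcases smul_eq_zero.mp h0 with h' | h'
    · have hc0 : c = 0 := by linear_combination (-2 : ℂ) * h'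
      rw [hc, hc0, zero_smul]
    · exact absurd h' hε0
  -- Part 1 : T ε ≠ 0
  have part1 : T ε ≠ 0 := by
    intro hTε
    -- T vanishes on A0
    have hTA0 : ∀ z ∈ A0, T z = 0 := by
      intro z hz
      obtain ⟨c, hc⟩ := memA0 z hz
      rw [hc, map_smul, hTε, smul_zero]
    -- there is an odd element with image ε
    have hx : ∃ x ∈ A1, T x = ε := by
      by_contra hno
      push_neg at hno
      apply hTne
      ext y
      have hy : y ∈ A0 ⊔ A1 := by rw [hcompl.sup_eq_top]; trivial
      obtain ⟨y0, hy0, y1, hy1, rfl⟩ := Submodule.mem_sup.mp hy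
      obtain ⟨d, hd⟩ := memA0 (T y1) (hT1 y1 hy1)
      have hd0 : d = 0 := by
        by_contra hd0
        exact hno (d⁻¹ • y1) (Submodule.smul_mem _ _ hy1)
          (by rw [map_smul, hd, smul_smul, inv_mul_cancel₀ hd0, one_smul])
      simp [map_add, hTA0 y0 hy0, hd, hd0]
    obtain ⟨x, hx1, hTx⟩ := hx
    set b : A := mul ε x with hb
    have hb1 : b ∈ A1 := h01 ε hεA0 x hx1
    -- key: for y1 ∈ A1 with T y1 = d • ε, mul ε y1 = d • b
    have hkey : ∀ y1 ∈ A1, ∀ d : ℂ, T y1 = d • ε → mul ε y1 = d • b := by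
      intro y1 hy1 d hd
      have hz : T (mul x y1) = 0 := hTA0 _ (h11 x hx1 y1 hy1)
      have h := hLeib1 x hx1 y1
      rw [hz, hTx, hd, mul_smul_right] at h
      rw [← hcomm0 ε hεA0 x] at h
      have h' := h.symm
      rw [sub_eq_zero] at h'
      exact h'
    -- T b = ε
    have hTb : T b = ε := by
      have h := hLeib0 ε hεA0 x
      rw [hTε, hTx, hεsq] at h
      simpa using h
    have hεb : mul ε b = b := by
      have h := hkey b hb1 1 (by rw [hTb, one_smul])
      rw [h, one_smul]
    have hbε : mul b ε = b := by rw [← hcomm0 ε hεA0 b, hεb]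
    by_cases hb0 : b = 0
    · -- then span {ε} is a nonzero ideal, so A = ℂε, so A1 = 0, contradiction
      have hideal : ∀ z ∈ Submodule.span ℂ ({ε} : Set A), ∀ y : A,
          mul z y ∈ Submodule.span ℂ ({ε} : Set A) ∧
          mul y z ∈ Submodule.span ℂ ({ε} : Set A) := by
        intro z hz y
        obtain ⟨k, hk⟩ := Submodule.mem_span_singleton.mp hz
        have hy : y ∈ A0 ⊔ A1 := by rw [hcompl.sup_eq_top]; trivial
        obtain ⟨y0, hy0, y1, hy1, rfl⟩ := Submodule.mem_sup.mp hy
        obtain ⟨c, hc⟩ := memA0 y0 hy0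
        obtain ⟨d, hd⟩ := memA0 (T y1) (hT1 y1 hy1)
        have h1 : mul ε y1 = 0 := by rw [hkey y1 hy1 d hd, hb0, smul_zero]
        have hεy : mul ε (y0 + y1) = c • ε := by
          rw [mul_add_right, h1, add_zero, hc, mul_smul_right, hεsq]
        have hεmem : ε ∈ Submodule.span ℂ ({ε} : Set A) :=
          Submodule.mem_span_singleton_self ε
        constructor
        · rw [← hk, mul_smul_left, hεy]
          exact Submodule.smul_mem _ _ (Submodule.smul_mem _ _ hεmem)
        · rw [← hk, mul_smul_right, ← hcomm0 ε hεA0 (y0 + y1), hεy]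
          exact Submodule.smul_mem _ _ (Submodule.smul_mem _ _ hεmem)
      rcases hsimple _ hideal with h | h
      · have : ε ∈ (⊥ : Submodule ℂ A) := by
          rw [← h]; exact Submodule.mem_span_singleton_self ε
        exact hε0 (by simpa using this)
      · have hxmem : x ∈ Submodule.span ℂ ({ε} : Set A) := by rw [h]; trivial
        have hxA0 : x ∈ A0 := by rw [hA0]; exact hxmem
        have hx0 : x = 0 := hinf x hxA0 hx1
        rw [hx0, map_zero] at hTx
        exact hε0 hTx.symm
    · -- span {ε, b} is an ideal, hence ⊤; then span {b} is an ideal, hence ⊤;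
      -- then ε ∈ A1, contradiction
      have hbb : mul b b = 0 := hsq1 b hb1
      have hmem : ∀ p q : ℂ, p • ε + q • b ∈
          Submodule.span ℂ ({ε, b} : Set A) := fun p q =>
        Submodule.mem_span_pair.mpr ⟨p, q, rfl⟩
      have hKideal : ∀ z ∈ Submodule.span ℂ ({ε, b} : Set A), ∀ y : A,
          mul z y ∈ Submodule.span ℂ ({ε, b} : Set A) ∧
          mul y z ∈ Submodule.span ℂ ({ε, b} : Set A) := by
        intro z hz y
        obtain ⟨k, l, hkl⟩ := Submodule.mem_span_pair.mp hz
        have hy : y ∈ A0 ⊔ A1 := by rw [hcompl.sup_eq_top]; trivial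
        obtain ⟨y0, hy0, y1, hy1, rfl⟩ := Submodule.mem_sup.mp hy
        obtain ⟨c, hc⟩ := memA0 y0 hy0
        obtain ⟨d, hd⟩ := memA0 (T y1) (hT1 y1 hy1)
        obtain ⟨e, he⟩ := memA0 (mul b y1) (h11 b hb1 y1 hy1)
        have hεy : mul ε (y0 + y1) = c • ε + d • b := by
          rw [mul_add_right, hkey y1 hy1 d hd, hc, mul_smul_right, hεsq]
        have hby : mul b (y0 + y1) = e • ε + c • b := by
          rw [mul_add_right, he, hc, mul_smul_right, hbε, add_comm]
        have hyε : mul (y0 + y1) ε = c • ε + d • b := by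
          rw [← hcomm0 ε hεA0 (y0 + y1)]; exact hεy
        have hyb : mul (y0 + y1) b = (-e) • ε + c • b := by
          rw [mul_add_left, hcomm0 y0 hy0 b, hcomm1 y1 hy1 b hb1,
            hc, mul_smul_right, hbε, he, neg_smul]
          abel
        constructor
        · rw [← hkl, mul_add_left, mul_smul_left, mul_smul_left, hεy, hby]
          exact Submodule.add_mem _
            (Submodule.smul_mem _ _ (hmem c d)) (Submodule.smul_mem _ _ (hmem e c))
        · rw [← hkl, mul_add_right, mul_smul_right, mul_smul_right, hyε, hyb]
          exact Submodule.add_mem _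
            (Submodule.smul_mem _ _ (hmem c d)) (Submodule.smul_mem _ _ (hmem (-e) c))
      rcases hsimple _ hKideal with hK | hK
      · have : ε ∈ (⊥ : Submodule ℂ A) := by
          rw [← hK]; exact Submodule.subset_span (by left; rfl)
        exact hε0 (by simpa using this)
      · -- span {b} is an ideal
        have hJideal : ∀ z ∈ Submodule.span ℂ ({b} : Set A), ∀ y : A,
            mul z y ∈ Submodule.span ℂ ({b} : Set A) ∧
            mul y z ∈ Submodule.span ℂ ({b} : Set A) := by
          intro z hz y
          obtain ⟨m, hm⟩ := Submodule.mem_span_singleton.mp hz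
          have hy : y ∈ Submodule.span ℂ ({ε, b} : Set A) := by rw [hK]; trivial
          obtain ⟨p, q, hpq⟩ := Submodule.mem_span_pair.mp hy
          have hby : mul b y = p • b := by
            rw [← hpq, mul_add_right, mul_smul_right, mul_smul_right, hbε,
              hbb, smul_zero, add_zero]
          have hyb : mul y b = p • b := by
            rw [← hpq, mul_add_left, mul_smul_left, mul_smul_left, hεb,
              hbb, smul_zero, add_zero]
          have hbmem : b ∈ Submodule.span ℂ ({b} : Set A) :=
            Submodule.mem_span_singleton_self b
          constructor
          · rw [← hm, mul_smul_left, hby]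
            exact Submodule.smul_mem _ _ (Submodule.smul_mem _ _ hbmem)
          · rw [← hm, mul_smul_right, hyb]
            exact Submodule.smul_mem _ _ (Submodule.smul_mem _ _ hbmem)
        rcases hsimple _ hJideal with hJ | hJ
        · have : b ∈ (⊥ : Submodule ℂ A) := by
            rw [← hJ]; exact Submodule.mem_span_singleton_self b
          exact hb0 (by simpa using this)
        · have hεJ : ε ∈ Submodule.span ℂ ({b} : Set A) := by rw [hJ]; trivial
          obtain ⟨μ, hμ⟩ := Submodule.mem_span_singleton.mp hεJ
          have hεA1 : ε ∈ A1 := by rw [← hμ]; exact Submodule.smul_mem _ _ hb1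
          exact hε0 (hinf ε hεA0 hεA1)
  exact ⟨part1, part2, part3⟩
end

section
/- Let A be a simple ℤ/2-graded commutative algebra with A⁰ = ℂ·ε admitting an odd derivation T with T(ε) ≠ 0. Then the bilinear form ω : A¹ × A¹ → ℂ defined by x·y = ω(x,y)ε is a non-degenerate skew-symmetric form, and dim A¹ = 2. -/
/-!
Put `u = T ε`. Applying `T` to `ε² = ε` gives `ε u = u / 2`; applying it to `ε u` and to `x u`
then gives `T u = 0` and `x u = (c / 2) ε` whenever `T x = c ε`. By simplicity, an ideal contained
in `A¹` is zero. If `T` killed `A¹`, then `A¹ A¹ = 0` would make `A¹` an ideal; so `T v ≠ 0` for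
some `v ∈ A¹`. If `x ∈ A¹` has `T x = 0` and `v x = 0`, then `ε x = 0` and `x A¹ = 0`, so `ℂ x` is
an ideal and `x = 0`. Hence `x ↦ (T x, v x)` embeds `A¹` into `ℂε × ℂε`, while `u` and `v` are
independent; and `x A¹ = 0` forces `T x = 0` (test against `u`) and `v x = 0`.
-/

namespace OddDerivation

variable {K A : Type*} [Field K] [AddCommGroup A] [Module K A]
  {mul : A →ₗ[K] A →ₗ[K] A} {T : A →ₗ[K] A} {A1 : Submodule K A} {ε : A}

def IsTwoSidedIdeal (mul : A →ₗ[K] A →ₗ[K] A) (I : Submodule K A) : Prop :=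
  ∀ x ∈ I, ∀ y : A, mul x y ∈ I ∧ mul y x ∈ I

theorem eq_zero_of_eq_neg [NeZero (2 : K)] {y : A} (h : y = -y) : y = 0 := by
  have h2 : (2 : K) • y = 0 := by
    rw [two_smul]
    nth_rewrite 2 [h]
    exact add_neg_cancel y
  exact (smul_eq_zero.mp h2).resolve_left two_ne_zero

theorem mul_eq_self_of_mem_span (hεε : mul ε ε = ε) {z : A} (hz : z ∈ K ∙ ε) :
    mul ε z = z := by
  obtain ⟨c, rfl⟩ := Submodule.mem_span_singleton.mp hz
  rw [map_smul, hεε]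

theorem eq_zero_of_mem_span_of_map_eq_zero (hTε : T ε ≠ 0) {z : A} (hz : z ∈ K ∙ ε)
    (hTz : T z = 0) : z = 0 := by
  obtain ⟨c, rfl⟩ := Submodule.mem_span_singleton.mp hz
  rw [map_smul] at hTz
  rw [(smul_eq_zero.mp hTz).resolve_right hTε, zero_smul]

theorem mul_map_eq_half_smul [NeZero (2 : K)] (hεε : mul ε ε = ε)
    (hcomm : mul ε (T ε) = mul (T ε) ε)
    (hLeib : T (mul ε ε) = mul (T ε) ε + mul ε (T ε)) :
    mul ε (T ε) = (2⁻¹ : K) • T ε := by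
  have h2 : (2 : K) • mul ε (T ε) = T ε := by
    rw [two_smul]
    nth_rewrite 1 [hcomm]
    rw [← hLeib, hεε]
  conv_rhs => rw [← h2]
  rw [smul_smul, inv_mul_cancel₀ two_ne_zero, one_smul]

theorem map_map_eq_zero [NeZero (2 : K)] (hεε : mul ε ε = ε)
    (hhalf : mul ε (T ε) = (2⁻¹ : K) • T ε) (hsq : mul (T ε) (T ε) = 0)
    (hTT : T (T ε) ∈ K ∙ ε)
    (hLeib : T (mul ε (T ε)) = mul (T ε) (T ε) + mul ε (T (T ε))) :
    T (T ε) = 0 := by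
  have hfix : (2⁻¹ : K) • T (T ε) = T (T ε) := by
    rw [← map_smul, ← hhalf, hLeib, hsq, zero_add, mul_eq_self_of_mem_span hεε hTT]
  have hdouble : (2 : K) • T (T ε) = T (T ε) := by
    conv_lhs => rw [← hfix]
    rw [smul_smul, mul_inv_cancel₀ two_ne_zero, one_smul]
  rwa [two_smul, add_eq_right] at hdouble

theorem mul_map_eq_smul [NeZero (2 : K)] (hTε : T ε ≠ 0)
    (hhalf : mul ε (T ε) = (2⁻¹ : K) • T ε) (hTT : T (T ε) = 0) {x : A} {c : K}
    (hx : mul x (T ε) ∈ K ∙ ε) (hTx : T x = c • ε)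
    (hLeib : T (mul x (T ε)) = mul (T x) (T ε) - mul x (T (T ε))) :
    mul x (T ε) = (2⁻¹ * c) • ε := by
  refine sub_eq_zero.mp (eq_zero_of_mem_span_of_map_eq_zero hTε
    (sub_mem hx (Submodule.smul_mem _ _ (Submodule.mem_span_singleton_self ε))) ?_)
  rw [map_sub, hLeib, hTx, hTT, map_zero, sub_zero, map_smul, LinearMap.smul_apply, hhalf,
    map_smul, smul_smul, mul_comm, sub_self]

theorem eq_bot_of_isTwoSidedIdeal_of_le
    (hsimple : ∀ I : Submodule K A, IsTwoSidedIdeal mul I → I = ⊥ ∨ I = ⊤) (hA1 : A1 ≠ ⊤)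
    {I : Submodule K A} (hI : IsTwoSidedIdeal mul I) (hle : I ≤ A1) : I = ⊥ :=
  (hsimple I hI).resolve_right fun h => hA1 (top_le_iff.mp (h ▸ hle))

theorem exists_mul_eq_smul_of_mul_eq_zero (hcodisj : Codisjoint (K ∙ ε) A1) {x : A}
    (hcomm : mul ε x = mul x ε) (hanti : ∀ b ∈ A1, mul b x = -mul x b)
    (hx0 : ∀ b ∈ A1, mul x b = 0) (y : A) :
    ∃ c : K, mul x y = c • mul ε x ∧ mul y x = c • mul ε x := by
  obtain ⟨a, b, ha, hb, rfl⟩ := Submodule.codisjoint_iff_exists_add_eq.mp hcodisj y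
  obtain ⟨c, rfl⟩ := Submodule.mem_span_singleton.mp ha
  refine ⟨c, ?_, ?_⟩ <;> simp [hcomm, hanti b hb, hx0 b hb]

theorem isTwoSidedIdeal_span_singleton (hcodisj : Codisjoint (K ∙ ε) A1) {x : A}
    (hcomm : mul ε x = mul x ε) (hanti : ∀ b ∈ A1, mul b x = -mul x b)
    (hx0 : ∀ b ∈ A1, mul x b = 0) (hεx : mul ε x = 0) :
    IsTwoSidedIdeal mul (K ∙ x) := by
  intro z hz y
  obtain ⟨a, rfl⟩ := Submodule.mem_span_singleton.mp hz
  obtain ⟨c, hxy, hyx⟩ := exists_mul_eq_smul_of_mul_eq_zero hcodisj hcomm hanti hx0 y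
  simp [hxy, hyx, hεx]

theorem isTwoSidedIdeal_of_mul_eq_zero (hcodisj : Codisjoint (K ∙ ε) A1)
    (hcomm : ∀ y, mul ε y = mul y ε) (hanti : ∀ x ∈ A1, ∀ y ∈ A1, mul x y = -mul y x)
    (hεA1 : ∀ x ∈ A1, mul ε x ∈ A1) (hzero : ∀ x ∈ A1, ∀ y ∈ A1, mul x y = 0) :
    IsTwoSidedIdeal mul A1 := by
  intro x hx y
  obtain ⟨c, hxy, hyx⟩ := exists_mul_eq_smul_of_mul_eq_zero hcodisj (hcomm x)
    (fun b hb => hanti b hb x hx) (hzero x hx) y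
  rw [hxy, hyx]
  exact ⟨A1.smul_mem c (hεA1 x hx), A1.smul_mem c (hεA1 x hx)⟩

theorem exists_mem_map_ne_zero
    (hsimple : ∀ I : Submodule K A, IsTwoSidedIdeal mul I → I = ⊥ ∨ I = ⊤) (hA1 : A1 ≠ ⊤)
    (hcodisj : Codisjoint (K ∙ ε) A1) (hcomm : ∀ y, mul ε y = mul y ε)
    (hanti : ∀ x ∈ A1, ∀ y ∈ A1, mul x y = -mul y x) (hεA1 : ∀ x ∈ A1, mul ε x ∈ A1)
    (h11 : ∀ x ∈ A1, ∀ y ∈ A1, mul x y ∈ K ∙ ε)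
    (hLeib : ∀ x ∈ A1, ∀ y : A, T (mul x y) = mul (T x) y - mul x (T y))
    (hTε : T ε ≠ 0) (hu : T ε ∈ A1) :
    ∃ v ∈ A1, T v ≠ 0 := by
  by_contra! hT
  have hzero : ∀ x ∈ A1, ∀ y ∈ A1, mul x y = 0 := fun x hx y hy =>
    eq_zero_of_mem_span_of_map_eq_zero hTε (h11 x hx y hy)
      (by rw [hLeib x hx y, hT x hx, hT y hy, map_zero, map_zero, sub_zero, LinearMap.zero_apply])
  have hbot := eq_bot_of_isTwoSidedIdeal_of_le hsimple hA1
    (isTwoSidedIdeal_of_mul_eq_zero hcodisj hcomm hanti hεA1 hzero) le_rfl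
  exact hTε ((Submodule.mem_bot K).mp (hbot ▸ hu))

theorem eq_zero_of_map_eq_zero_of_mul_eq_zero
    (hsimple : ∀ I : Submodule K A, IsTwoSidedIdeal mul I → I = ⊥ ∨ I = ⊤) (hA1 : A1 ≠ ⊤)
    (hcodisj : Codisjoint (K ∙ ε) A1) (hcomm : ∀ y, mul ε y = mul y ε)
    (hanti : ∀ x ∈ A1, ∀ y ∈ A1, mul x y = -mul y x)
    (h11 : ∀ x ∈ A1, ∀ y ∈ A1, mul x y ∈ K ∙ ε) (hT1 : ∀ x ∈ A1, T x ∈ K ∙ ε)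
    (hLeib : ∀ x ∈ A1, ∀ y : A, T (mul x y) = mul (T x) y - mul x (T y))
    (hTε : T ε ≠ 0) {v : A} (hv : v ∈ A1) (hTv : T v ≠ 0)
    {x : A} (hx : x ∈ A1) (hTx : T x = 0) (hvx : mul v x = 0) : x = 0 := by
  have hεx : mul ε x = 0 := by
    obtain ⟨b, hb⟩ := Submodule.mem_span_singleton.mp (hT1 v hv)
    have h := hLeib v hv x
    have hb0 : b ≠ 0 := by
      rintro rfl
      exact hTv (by rw [← hb, zero_smul])
    rw [hvx, hTx, ← hb, map_zero, map_zero, sub_zero, map_smul, LinearMap.smul_apply] at h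
    exact (smul_eq_zero.mp h.symm).resolve_left hb0
  have hx0 : ∀ y ∈ A1, mul x y = 0 := fun y hy => by
    refine eq_zero_of_mem_span_of_map_eq_zero hTε (h11 x hx y hy) ?_
    obtain ⟨c, hc⟩ := Submodule.mem_span_singleton.mp (hT1 y hy)
    rw [hLeib x hx y, hTx, ← hc, map_smul, ← hcomm, hεx, map_zero]
    simp
  have hbot := eq_bot_of_isTwoSidedIdeal_of_le hsimple hA1
    (isTwoSidedIdeal_span_singleton hcodisj (hcomm x) (fun b hb => hanti b hb x hx) hx0 hεx)
    ((Submodule.span_singleton_le_iff_mem x A1).mpr hx)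
  exact Submodule.span_singleton_eq_bot.mp hbot

theorem linearIndependent_pair_of_map_eq_zero {M N : Type*} [AddCommGroup M] [Module K M]
    [AddCommGroup N] [Module K N] (f : M →ₗ[K] N) {u v : M} (hu : u ≠ 0) (hfu : f u = 0)
    (hfv : f v ≠ 0) : LinearIndependent K ![u, v] := by
  refine LinearIndependent.pair_iff.mpr fun s t hst => ?_
  have ht : t = 0 := by
    have h := congrArg f hst
    rw [map_add, map_smul, map_smul, hfu, smul_zero, zero_add, map_zero] at h
    exact (smul_eq_zero.mp h).resolve_right hfv
  rw [ht, zero_smul, add_zero] at hst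
  exact ⟨(smul_eq_zero.mp hst).resolve_right hu, ht⟩

theorem finrank_eq_two_of_jointly_injective {M N : Type*} [AddCommGroup M] [Module K M]
    [AddCommGroup N] [Module K N] (f g : M →ₗ[K] N) {W : Submodule K M} {e : N} (he : e ≠ 0)
    (hf : ∀ x ∈ W, f x ∈ K ∙ e) (hg : ∀ x ∈ W, g x ∈ K ∙ e)
    (hinj : ∀ x ∈ W, f x = 0 → g x = 0 → x = 0) {u v : M} (hu : u ∈ W) (hv : v ∈ W)
    (huv : LinearIndependent K ![u, v]) : Module.finrank K W = 2 := by
  let Φ : W →ₗ[K] (K ∙ e) × (K ∙ e) := (f.restrict hf).prod (g.restrict hg)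
  have hΦ : Function.Injective Φ := by
    refine (injective_iff_map_eq_zero Φ).mpr fun x hx => Subtype.ext (hinj x x.2 ?_ ?_)
    · exact congrArg (fun p => (p.1 : N)) hx
    · exact congrArg (fun p => (p.2 : N)) hx
  have : Module.Finite K W := Module.Finite.of_injective Φ hΦ
  refine le_antisymm ?_ ?_
  · calc Module.finrank K W ≤ Module.finrank K ((K ∙ e) × (K ∙ e)) :=
          LinearMap.finrank_le_finrank_of_injective hΦ
      _ = 2 := by rw [Module.finrank_prod, finrank_span_singleton he]
  · calc 2 = Module.finrank K (Submodule.span K (Set.range ![u, v])) := by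
          rw [finrank_span_eq_card huv, Fintype.card_fin]
      _ ≤ Module.finrank K W := Submodule.finrank_mono (by
          rw [Submodule.span_le, Matrix.range_cons, Matrix.range_cons, Matrix.range_empty]
          simp [Set.insert_subset_iff, hu, hv])

theorem exists_mul_ne_zero [NeZero (2 : K)] (hε : ε ≠ 0)
    (hanti : ∀ x ∈ A1, ∀ y ∈ A1, mul x y = -mul y x)
    (h11 : ∀ x ∈ A1, ∀ y ∈ A1, mul x y ∈ K ∙ ε) (hT1 : ∀ x ∈ A1, T x ∈ K ∙ ε)
    (hLeib : ∀ x ∈ A1, ∀ y : A, T (mul x y) = mul (T x) y - mul x (T y))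
    (hTε : T ε ≠ 0) (hhalf : mul ε (T ε) = (2⁻¹ : K) • T ε) (hTT : T (T ε) = 0)
    (hu : T ε ∈ A1) {v : A} (hv : v ∈ A1)
    (hker : ∀ x ∈ A1, T x = 0 → mul v x = 0 → x = 0)
    {x : A} (hx : x ∈ A1) (hx0 : x ≠ 0) : ∃ y ∈ A1, mul x y ≠ 0 := by
  by_contra! h
  obtain ⟨c, hc⟩ := Submodule.mem_span_singleton.mp (hT1 x hx)
  have hxu := mul_map_eq_smul hTε hhalf hTT (h11 x hx _ hu) hc.symm (hLeib x hx _)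
  have hc0 : c = 0 := by simpa [h _ hu, hε, two_ne_zero] using hxu.symm
  refine hx0 (hker x hx ?_ ?_)
  · rw [← hc, hc0, zero_smul]
  · rw [hanti v hv x hx, h v hv, neg_zero]

end OddDerivation

open OddDerivation

theorem stmt18_general {A : Type*} [AddCommGroup A] [Module ℂ A]
    (mul : A →ₗ[ℂ] A →ₗ[ℂ] A)
    (A0 A1 : Submodule ℂ A) (hcompl : IsCompl A0 A1)
    (h01 : ∀ x ∈ A0, ∀ y ∈ A1, mul x y ∈ A1)
    (h11 : ∀ x ∈ A1, ∀ y ∈ A1, mul x y ∈ A0)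
    (hcomm0 : ∀ x ∈ A0, ∀ y : A, mul x y = mul y x)
    (hcomm1 : ∀ x ∈ A1, ∀ y ∈ A1, mul x y = -mul y x)
    (ε : A) (hε0 : ε ≠ 0) (hA0 : A0 = Submodule.span ℂ {ε})
    (hεsq : mul ε ε = ε)
    (hsimple : ∀ I : Submodule ℂ A,
      (∀ x ∈ I, ∀ y : A, mul x y ∈ I ∧ mul y x ∈ I) → I = ⊥ ∨ I = ⊤)
    (T : A →ₗ[ℂ] A)
    (hT0 : ∀ x ∈ A0, T x ∈ A1) (hT1 : ∀ x ∈ A1, T x ∈ A0)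
    (hLeib0 : ∀ x ∈ A0, ∀ y : A, T (mul x y) = mul (T x) y + mul x (T y))
    (hLeib1 : ∀ x ∈ A1, ∀ y : A, T (mul x y) = mul (T x) y - mul x (T y))
    (hTε : T ε ≠ 0) :
    (∀ x ∈ A1, ∀ y ∈ A1, ∃ c : ℂ, mul x y = c • ε) ∧
    (∀ x ∈ A1, ∀ y ∈ A1, mul x y = -mul y x) ∧
    (∀ x ∈ A1, x ≠ 0 → ∃ y ∈ A1, mul x y ≠ 0) ∧
    Module.finrank ℂ A1 = 2 := by
  subst hA0
  have hεA0 : ε ∈ ℂ ∙ ε := Submodule.mem_span_singleton_self ε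
  have hA1 : A1 ≠ ⊤ := fun h =>
    hε0 (Submodule.disjoint_def.mp hcompl.disjoint ε hεA0 (h ▸ Submodule.mem_top))
  have hu : T ε ∈ A1 := hT0 ε hεA0
  have hcomm := hcomm0 ε hεA0
  have hhalf := mul_map_eq_half_smul hεsq (hcomm _) (hLeib0 ε hεA0 ε)
  have hTT := map_map_eq_zero hεsq hhalf (eq_zero_of_eq_neg (K := ℂ) (hcomm1 _ hu _ hu)) (hT1 _ hu)
    (hLeib0 ε hεA0 _)
  obtain ⟨v, hv, hTv⟩ := exists_mem_map_ne_zero hsimple hA1 hcompl.codisjoint hcomm hcomm1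
    (h01 ε hεA0) h11 hLeib1 hTε hu
  have hker : ∀ x ∈ A1, T x = 0 → mul v x = 0 → x = 0 := fun x hx =>
    eq_zero_of_map_eq_zero_of_mul_eq_zero hsimple hA1 hcompl.codisjoint hcomm hcomm1 h11 hT1
      hLeib1 hTε hv hTv hx
  refine ⟨fun x hx y hy => ?_, hcomm1, fun x hx hx0 => ?_, ?_⟩
  · obtain ⟨c, hc⟩ := Submodule.mem_span_singleton.mp (h11 x hx y hy)
    exact ⟨c, hc.symm⟩
  · exact exists_mul_ne_zero hε0 hcomm1 h11 hT1 hLeib1 hTε hhalf hTT hu hv hker hx hx0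
  · exact finrank_eq_two_of_jointly_injective T (mul v) hε0 hT1 (h11 v hv) hker hu hv
      (linearIndependent_pair_of_map_eq_zero T hTε hTT hTv)

/-- Let `A` be a simple ℤ/2-graded commutative ℂ-algebra with
`A⁰ = ℂ·ε` admitting an odd derivation `T` with `T ε ≠ 0`.  Then the bilinear form
`ω : A¹ × A¹ → ℂ` defined by `x·y = ω(x,y) ε` is a non-degenerate skew-symmetric
form, and `dim A¹ = 2`. -/
theorem stmt18 {A : Type*} [AddCommGroup A] [Module ℂ A]
    (mul : A →ₗ[ℂ] A →ₗ[ℂ] A)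
    (A0 A1 : Submodule ℂ A) (hcompl : IsCompl A0 A1)
    (h00 : ∀ x ∈ A0, ∀ y ∈ A0, mul x y ∈ A0)
    (h01 : ∀ x ∈ A0, ∀ y ∈ A1, mul x y ∈ A1)
    (h10 : ∀ x ∈ A1, ∀ y ∈ A0, mul x y ∈ A1)
    (h11 : ∀ x ∈ A1, ∀ y ∈ A1, mul x y ∈ A0)
    (hcomm0 : ∀ x ∈ A0, ∀ y : A, mul x y = mul y x)
    (hcomm1 : ∀ x ∈ A1, ∀ y ∈ A1, mul x y = -mul y x)
    (ε : A) (hε0 : ε ≠ 0) (hA0 : A0 = Submodule.span ℂ {ε})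
    (hεsq : mul ε ε = ε)
    (hsimple : ∀ I : Submodule ℂ A,
      (∀ x ∈ I, ∀ y : A, mul x y ∈ I ∧ mul y x ∈ I) → I = ⊥ ∨ I = ⊤)
    (T : A →ₗ[ℂ] A)
    (hT0 : ∀ x ∈ A0, T x ∈ A1) (hT1 : ∀ x ∈ A1, T x ∈ A0)
    (hLeib0 : ∀ x ∈ A0, ∀ y : A, T (mul x y) = mul (T x) y + mul x (T y))
    (hLeib1 : ∀ x ∈ A1, ∀ y : A, T (mul x y) = mul (T x) y - mul x (T y))
    (hTε : T ε ≠ 0) :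
    (∀ x ∈ A1, ∀ y ∈ A1, ∃ c : ℂ, mul x y = c • ε) ∧
    (∀ x ∈ A1, ∀ y ∈ A1, mul x y = -mul y x) ∧
    (∀ x ∈ A1, x ≠ 0 → ∃ y ∈ A1, mul x y ≠ 0) ∧
    Module.finrank ℂ A1 = 2 :=
  stmt18_general mul A0 A1 hcompl h01 h11 hcomm0 hcomm1 ε hε0 hA0 hεsq hsimple T hT0 hT1 hLeib0
    hLeib1 hTε
end
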